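/- Let V be a finite type of users, p : V → ℝ → ℝ with 0 ≤ p v d ≤ 1 for all v, d and p v nondecreasing in d, and q : Finset V → ℝ monotone and submodular. Let ε ∈ [0,1) and let γ : Finset V → ℝ satisfy (1 − ε)·q(U) ≤ γ(U) ≤ (1 + ε)·q(U) for all U : Finset V. For S : Finset (V × ℝ) define ρ_S(v) = p v (max of {d : (v,d) ∈ S}) if v receives some coupon in S and ρ_S(v) = 0 otherwise, Pr(U;S) = (∏_{u ∈ U} ρ_S(u)) · (∏_{v ∉ U} (1 − ρ_S(v))), f(S) = Σ_{U ⊆ V} Pr(U;S) · γ(U), and g(S) = Σ_{U ⊆ V} Pr(U;S) · q(U). Then g is monotone and submodular, and (1 − ε)·g(S) ≤ f(S) ≤ (1 + ε)·g(S) for all S; that is, f is ε-approximately submodular. -/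

import Mathlib

/-!
Write `ρ_S` for the vector of activation probabilities, so that `g(S) = F(ρ_S)` for the
multilinear extension `F(x) = ∑_U ∏_{u ∈ U} x_u ∏_{w ∉ U} (1 - x_w) q(U)` of `q`.
Since `F` is affine in each coordinate, `F` is monotone in `x` when `q` is monotone, and
`g(S + e) - g(S) = (ρ_{S+e}(v) - ρ_S(v)) · F(ρ_S; U ↦ q(U ∪ v) - q(U))` for `e = (v, d)`.
Both factors are nonnegative and antitone in `S`: the second because the marginals of a
monotone submodular `q` are nonnegative and antitone, the first because `ρ_S(v)` is a monotone
function of the largest coupon `v` receives, and taking the maximum with `d` gains less from a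
larger starting point. The approximation bounds hold termwise since `Pr(U; S) ≥ 0`.
-/

open Finset

/-- Activation probability of user `v` under allocation `S`: `p v` applied to the
largest coupon value offered to `v` in `S`, or `0` if `v` receives no coupon. -/
noncomputable def rho {V : Type*} [Fintype V] [DecidableEq V]
    (p : V → ℝ → ℝ) (S : Finset (V × ℝ)) (v : V) : ℝ :=
  if h : ((S.filter (fun e => e.1 = v)).image Prod.snd).Nonempty then
    p v (((S.filter (fun e => e.1 = v)).image Prod.snd).max' h)
  else 0

/-- Probability that exactly the set `U` of users becomes the seed set under
allocation `S`, users being activated independently. -/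
noncomputable def prSeed {V : Type*} [Fintype V] [DecidableEq V]
    (p : V → ℝ → ℝ) (U : Finset V) (S : Finset (V × ℝ)) : ℝ :=
  (∏ u ∈ U, rho p S u) * ∏ v ∈ Uᶜ, (1 - rho p S v)

/-- The expected cascade of allocation `S` with respect to a seed-set utility `γ`. -/
noncomputable def expCascade {V : Type*} [Fintype V] [DecidableEq V]
    (p : V → ℝ → ℝ) (γ : Finset V → ℝ) (S : Finset (V × ℝ)) : ℝ :=
  ∑ U : Finset V, prSeed p U S * γ U

lemma Monotone.map_max_sub_antitone {α β : Type*} [LinearOrder α] [AddCommGroup β]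
    [PartialOrder β] [IsOrderedAddMonoid β] {φ : α → β} (hφ : Monotone φ) {a b : α}
    (hab : a ≤ b) (d : α) : φ (max b d) - φ b ≤ φ (max a d) - φ a := by
  rcases le_total d a with hda | had
  · rw [max_eq_left hda, max_eq_left (hda.trans hab), sub_self, sub_self]
  rw [max_eq_right had]
  rcases le_total d b with hdb | hbd
  · rw [max_eq_left hdb, sub_self]
    exact sub_nonneg.2 (hφ had)
  · rw [max_eq_right hbd]
    exact sub_le_sub_left (hφ hab) _

lemma WithBot.monotone_recBotCoe {α β : Type*} [Preorder α] [Preorder β] {b : β}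
    {f : α → β} (hf : Monotone f) (hb : ∀ a, b ≤ f a) :
    Monotone (WithBot.recBotCoe b f : WithBot α → β) :=
  WithBot.monotone_iff.2 ⟨hf, hb⟩

section Coupons

variable {V : Type*} [DecidableEq V]

noncomputable def couponValues (S : Finset (V × ℝ)) (v : V) : Finset ℝ :=
  (S.filter (fun e => e.1 = v)).image Prod.snd

lemma couponValues_mono {S T : Finset (V × ℝ)} (h : S ⊆ T) (v : V) :
    couponValues S v ⊆ couponValues T v :=
  image_subset_image (filter_subset_filter _ h)

lemma couponValues_insert_self (e : V × ℝ) (S : Finset (V × ℝ)) :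
    couponValues (insert e S) e.1 = insert e.2 (couponValues S e.1) := by
  rw [couponValues, filter_insert, if_pos rfl, image_insert]
  rfl

lemma couponValues_insert_of_ne {e : V × ℝ} {v : V} (h : e.1 ≠ v) (S : Finset (V × ℝ)) :
    couponValues (insert e S) v = couponValues S v := by
  rw [couponValues, filter_insert, if_neg h]
  rfl

variable [Fintype V] {p : V → ℝ → ℝ}

lemma rho_eq_recBotCoe_max (S : Finset (V × ℝ)) (v : V) :
    rho p S v = WithBot.recBotCoe 0 (p v) (couponValues S v).max := by
  rw [rho]
  split_ifs with h
  · exact congrArg (WithBot.recBotCoe 0 (p v)) (coe_max' h)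
  · rw [show couponValues S v = ∅ from not_nonempty_iff_eq_empty.1 h]
    rfl

lemma rho_nonneg (hp0 : ∀ v d, 0 ≤ p v d) (S : Finset (V × ℝ)) : 0 ≤ rho p S := by
  intro v
  rw [rho]
  split_ifs
  exacts [hp0 _ _, le_rfl]

lemma rho_le_one (hp1 : ∀ v d, p v d ≤ 1) (S : Finset (V × ℝ)) : rho p S ≤ 1 := by
  intro v
  rw [rho]
  split_ifs
  exacts [hp1 _ _, zero_le_one]

variable (hp0 : ∀ v d, 0 ≤ p v d) (hp : ∀ v, Monotone (p v))
include hp0 hp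

lemma rho_mono : Monotone (rho p : Finset (V × ℝ) → V → ℝ) := by
  intro S T hST v
  rw [rho_eq_recBotCoe_max, rho_eq_recBotCoe_max]
  exact WithBot.monotone_recBotCoe (hp v) (hp0 v) (max_mono (couponValues_mono hST v))

lemma rho_insert_sub_le {X Y : Finset (V × ℝ)} (hXY : X ⊆ Y) (e : V × ℝ) :
    rho p (insert e Y) e.1 - rho p Y e.1 ≤ rho p (insert e X) e.1 - rho p X e.1 := by
  simp only [rho_eq_recBotCoe_max, couponValues_insert_self, max_insert,
    max_comm (e.2 : WithBot ℝ)]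
  exact (WithBot.monotone_recBotCoe (hp e.1) (hp0 e.1)).map_max_sub_antitone
    (max_mono (couponValues_mono hXY e.1)) _

end Coupons

section MultilinearExtension

variable {ι : Type*} [DecidableEq ι]

noncomputable def multilinExt (A : Finset ι) (x : ι → ℝ) (r : Finset ι → ℝ) : ℝ :=
  ∑ U ∈ A.powerset, (∏ u ∈ U, x u) * (∏ w ∈ A \ U, (1 - x w)) * r U

lemma multilinExt_empty (x : ι → ℝ) (r : Finset ι → ℝ) : multilinExt ∅ x r = r ∅ := by
  simp [multilinExt]

lemma multilinExt_congr {A : Finset ι} {x y : ι → ℝ} (h : ∀ u ∈ A, x u = y u)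
    (r : Finset ι → ℝ) : multilinExt A x r = multilinExt A y r := by
  refine sum_congr rfl fun U hU => ?_
  have hUA := mem_powerset.1 hU
  rw [prod_congr rfl fun u hu => h u (hUA hu),
    prod_congr rfl fun w hw => congrArg (1 - ·) (h w (mem_sdiff.1 hw).1)]

lemma multilinExt_sub (A : Finset ι) (x : ι → ℝ) (r s : Finset ι → ℝ) :
    multilinExt A x (r - s) = multilinExt A x r - multilinExt A x s := by
  simp only [multilinExt, Pi.sub_apply, mul_sub, sum_sub_distrib]

lemma multilinExt_neg (A : Finset ι) (x : ι → ℝ) (r : Finset ι → ℝ) :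
    multilinExt A x (-r) = -multilinExt A x r := by
  simp only [multilinExt, Pi.neg_apply, mul_neg, sum_neg_distrib]

lemma multilinExt_smul (A : Finset ι) (x : ι → ℝ) (c : ℝ) (r : Finset ι → ℝ) :
    multilinExt A x (c • r) = c * multilinExt A x r := by
  simp only [multilinExt, Pi.smul_apply, smul_eq_mul, mul_sum]
  exact sum_congr rfl fun _ _ => by ring

lemma multilinExt_insert {A : Finset ι} {v : ι} (hv : v ∉ A) (x : ι → ℝ)
    (r : Finset ι → ℝ) :
    multilinExt (insert v A) x r =
      (1 - x v) * multilinExt A x r + x v * multilinExt A x (fun U => r (insert v U)) := by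
  rw [multilinExt, sum_powerset_insert hv, multilinExt, multilinExt, mul_sum, mul_sum]
  congr 1 <;> refine sum_congr rfl fun U hU => ?_
  · have hvU : v ∉ A \ U := fun h => hv (mem_sdiff.1 h).1
    rw [insert_sdiff_of_notMem _ fun h => hv (mem_powerset.1 hU h), prod_insert hvU]
    ring
  · have hvU : v ∉ U := fun h => hv (mem_powerset.1 hU h)
    rw [insert_sdiff_insert, sdiff_insert_of_notMem hv, prod_insert hvU]
    ring

section UnitCube

variable {x : ι → ℝ} (hx0 : 0 ≤ x) (hx1 : x ≤ 1)
include hx0 hx1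

lemma multilinExt_le_multilinExt (A : Finset ι) {r s : Finset ι → ℝ} (h : r ≤ s) :
    multilinExt A x r ≤ multilinExt A x s := by
  refine sum_le_sum fun U hU => mul_le_mul_of_nonneg_left (h U) ?_
  refine mul_nonneg (prod_nonneg fun u _ => hx0 u) (prod_nonneg fun w _ => ?_)
  exact sub_nonneg.2 (hx1 w)

lemma multilinExt_nonneg (A : Finset ι) {r : Finset ι → ℝ} (hr : 0 ≤ r) :
    0 ≤ multilinExt A x r := by
  simpa only [multilinExt, Pi.zero_apply, mul_zero, sum_const_zero] using
    multilinExt_le_multilinExt hx0 hx1 A hr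

end UnitCube

lemma multilinExt_mono_of_monotone {r : Finset ι → ℝ} (hr : Monotone r) {x y : ι → ℝ}
    (hx0 : 0 ≤ x) (hxy : x ≤ y) (hy1 : y ≤ 1) (A : Finset ι) :
    multilinExt A x r ≤ multilinExt A y r := by
  induction A using Finset.induction_on generalizing r with
  | empty => rw [multilinExt_empty, multilinExt_empty]
  | insert v A hv ih =>
    rw [multilinExt_insert hv, multilinExt_insert hv]
    have hr_ins : Monotone fun U => r (insert v U) := fun U W h => hr (insert_subset_insert v h)
    have hy_ins : multilinExt A y r ≤ multilinExt A y (fun U => r (insert v U)) :=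
      multilinExt_le_multilinExt (hx0.trans hxy) hy1 A fun U => hr (subset_insert v U)
    calc (1 - x v) * multilinExt A x r + x v * multilinExt A x (fun U => r (insert v U))
        ≤ (1 - x v) * multilinExt A y r + x v * multilinExt A y (fun U => r (insert v U)) := by
          gcongr
          exacts [sub_nonneg.2 ((hxy v).trans (hy1 v)), ih hr, hx0 v, ih hr_ins]
      _ ≤ (1 - y v) * multilinExt A y r + y v * multilinExt A y (fun U => r (insert v U)) := by
          nlinarith [mul_le_mul_of_nonneg_right (hxy v) (sub_nonneg.2 hy_ins)]

lemma multilinExt_anti_of_antitone {r : Finset ι → ℝ} (hr : Antitone r) {x y : ι → ℝ}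
    (hx0 : 0 ≤ x) (hxy : x ≤ y) (hy1 : y ≤ 1) (A : Finset ι) :
    multilinExt A y r ≤ multilinExt A x r := by
  have := multilinExt_mono_of_monotone (r := -r) hr.neg hx0 hxy hy1 A
  rwa [multilinExt_neg, multilinExt_neg, neg_le_neg_iff] at this

lemma multilinExt_insert_sub {A : Finset ι} {v : ι} (hv : v ∉ A) {x y : ι → ℝ}
    (h : ∀ u ∈ A, x u = y u) (r : Finset ι → ℝ) :
    multilinExt (insert v A) y r - multilinExt (insert v A) x r =
      (y v - x v) * multilinExt A x (fun U => r (insert v U) - r U) := by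
  rw [multilinExt_insert hv, multilinExt_insert hv]
  simp only [← multilinExt_congr h]
  rw [show (fun U => r (insert v U) - r U) = (fun U => r (insert v U)) - r from rfl,
    multilinExt_sub]
  ring

end MultilinearExtension

lemma antitone_insert_sub {ι : Type*} [DecidableEq ι] {q : Finset ι → ℝ} (hq : Monotone q)
    (hsub : ∀ X Y : Finset ι, X ⊆ Y → ∀ x ∉ Y,
      q (insert x X) - q X ≥ q (insert x Y) - q Y)
    (v : ι) : Antitone fun U => q (insert v U) - q U := by
  intro U W hUW
  by_cases hvW : v ∈ W
  · simp only [insert_eq_of_mem hvW, sub_self, sub_nonneg]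
    exact hq (subset_insert v U)
  · exact hsub U W hUW v hvW

section ExpCascade

variable {V : Type*} [Fintype V] [DecidableEq V] {p : V → ℝ → ℝ}

lemma rho_insert_of_ne {e : V × ℝ} {v : V} (h : e.1 ≠ v) (S : Finset (V × ℝ)) :
    rho p (insert e S) v = rho p S v := by
  rw [rho_eq_recBotCoe_max, rho_eq_recBotCoe_max, couponValues_insert_of_ne h]

lemma expCascade_eq_multilinExt (γ : Finset V → ℝ) (S : Finset (V × ℝ)) :
    expCascade p γ S = multilinExt univ (rho p S) γ := by
  simp only [expCascade, prSeed, multilinExt, powerset_univ, compl_eq_univ_sdiff]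

lemma expCascade_smul (c : ℝ) (γ : Finset V → ℝ) (S : Finset (V × ℝ)) :
    expCascade p (c • γ) S = c * expCascade p γ S := by
  rw [expCascade_eq_multilinExt, expCascade_eq_multilinExt, multilinExt_smul]

lemma expCascade_insert_sub (q : Finset V → ℝ) (e : V × ℝ) (S : Finset (V × ℝ)) :
    expCascade p q (insert e S) - expCascade p q S =
      (rho p (insert e S) e.1 - rho p S e.1) *
        multilinExt (univ.erase e.1) (rho p S) (fun U => q (insert e.1 U) - q U) := by
  have h := multilinExt_insert_sub (x := rho p S) (y := rho p (insert e S)) (notMem_erase e.1 univ)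
    (fun u hu => (rho_insert_of_ne (ne_of_mem_erase hu).symm S).symm) q
  rwa [insert_erase (mem_univ e.1), ← expCascade_eq_multilinExt,
    ← expCascade_eq_multilinExt] at h

variable (hp0 : ∀ v d, 0 ≤ p v d) (hp1 : ∀ v d, p v d ≤ 1)
include hp0 hp1

lemma expCascade_le_expCascade {γ γ' : Finset V → ℝ} (h : γ ≤ γ')
    (S : Finset (V × ℝ)) : expCascade p γ S ≤ expCascade p γ' S := by
  rw [expCascade_eq_multilinExt, expCascade_eq_multilinExt]
  exact multilinExt_le_multilinExt (rho_nonneg hp0 S) (rho_le_one hp1 S) univ h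

variable (hp : ∀ v, Monotone (p v)) {q : Finset V → ℝ} (hq : Monotone q)
include hp hq

lemma expCascade_mono : Monotone (expCascade p q) := by
  intro S T hST
  rw [expCascade_eq_multilinExt, expCascade_eq_multilinExt]
  exact multilinExt_mono_of_monotone hq (rho_nonneg hp0 S) (rho_mono hp0 hp hST)
    (rho_le_one hp1 T) univ

lemma expCascade_insert_sub_antitone
    (hsub : ∀ X Y : Finset V, X ⊆ Y → ∀ x ∉ Y,
      q (insert x X) - q X ≥ q (insert x Y) - q Y)
    {X Y : Finset (V × ℝ)} (hXY : X ⊆ Y) (e : V × ℝ) :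
    expCascade p q (insert e Y) - expCascade p q Y ≤
      expCascade p q (insert e X) - expCascade p q X := by
  rw [expCascade_insert_sub, expCascade_insert_sub]
  have hρ_gain := rho_insert_sub_le hp0 hp hXY e
  have hρ_gain_nonneg := sub_nonneg.2 (rho_mono hp0 hp (subset_insert e Y) e.1)
  refine mul_le_mul hρ_gain ?_ ?_ (hρ_gain_nonneg.trans hρ_gain)
  · exact multilinExt_anti_of_antitone (antitone_insert_sub hq hsub e.1) (rho_nonneg hp0 X)
      (rho_mono hp0 hp hXY) (rho_le_one hp1 Y) _
  · exact multilinExt_nonneg (rho_nonneg hp0 Y) (rho_le_one hp1 Y) _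
      fun U => sub_nonneg.2 (hq (subset_insert e.1 U))

end ExpCascade

theorem expCascade_approx_submodular_general
    {V : Type*} [Fintype V] [DecidableEq V]
    (p : V → ℝ → ℝ)
    (hp0 : ∀ v d, 0 ≤ p v d) (hp1 : ∀ v d, p v d ≤ 1)
    (hpmono : ∀ v, ∀ d d' : ℝ, d ≤ d' → p v d ≤ p v d')
    (q : Finset V → ℝ)
    (hqmono : ∀ U W : Finset V, U ⊆ W → q U ≤ q W)
    (hqsub : ∀ X Y : Finset V, X ⊆ Y → ∀ x ∉ Y,
      q (insert x X) - q X ≥ q (insert x Y) - q Y)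
    (ε : ℝ)
    (γ : Finset V → ℝ)
    (hγ : ∀ U : Finset V, (1 - ε) * q U ≤ γ U ∧ γ U ≤ (1 + ε) * q U) :
    (∀ S T : Finset (V × ℝ), S ⊆ T →
      expCascade p q S ≤ expCascade p q T) ∧
    (∀ X Y : Finset (V × ℝ), X ⊆ Y → ∀ e ∉ Y,
      expCascade p q (insert e X) - expCascade p q X ≥
        expCascade p q (insert e Y) - expCascade p q Y) ∧
    (∀ S : Finset (V × ℝ),
      (1 - ε) * expCascade p q S ≤ expCascade p γ S ∧
        expCascade p γ S ≤ (1 + ε) * expCascade p q S) := by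
  have hp : ∀ v, Monotone (p v) := fun v d d' => hpmono v d d'
  have hq : Monotone q := fun U W => hqmono U W
  refine ⟨fun _ _ hST => expCascade_mono hp0 hp1 hp hq hST,
    fun X Y hXY e _ => expCascade_insert_sub_antitone hp0 hp1 hp hq hqsub hXY e,
    fun S => ⟨?_, ?_⟩⟩
  · rw [← expCascade_smul]
    exact expCascade_le_expCascade hp0 hp1 (fun U => (hγ U).1) S
  · rw [← expCascade_smul]
    exact expCascade_le_expCascade hp0 hp1 (fun U => (hγ U).2) S

theorem expCascade_approx_submodular
    {V : Type*} [Fintype V] [DecidableEq V]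
    (p : V → ℝ → ℝ)
    (hp0 : ∀ v d, 0 ≤ p v d) (hp1 : ∀ v d, p v d ≤ 1)
    (hpmono : ∀ v, ∀ d d' : ℝ, d ≤ d' → p v d ≤ p v d')
    (q : Finset V → ℝ)
    (hqmono : ∀ U W : Finset V, U ⊆ W → q U ≤ q W)
    (hqsub : ∀ X Y : Finset V, X ⊆ Y → ∀ x ∉ Y,
      q (insert x X) - q X ≥ q (insert x Y) - q Y)
    (ε : ℝ) (hε0 : 0 ≤ ε) (hε1 : ε < 1)
    (γ : Finset V → ℝ)
    (hγ : ∀ U : Finset V, (1 - ε) * q U ≤ γ U ∧ γ U ≤ (1 + ε) * q U) :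
    (∀ S T : Finset (V × ℝ), S ⊆ T →
      expCascade p q S ≤ expCascade p q T) ∧
    (∀ X Y : Finset (V × ℝ), X ⊆ Y → ∀ e ∉ Y,
      expCascade p q (insert e X) - expCascade p q X ≥
        expCascade p q (insert e Y) - expCascade p q Y) ∧
    (∀ S : Finset (V × ℝ),
      (1 - ε) * expCascade p q S ≤ expCascade p γ S ∧
        expCascade p γ S ≤ (1 + ε) * expCascade p q S) :=
  expCascade_approx_submodular_general p hp0 hp1 hpmono q hqmono hqsub ε γ hγ
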